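/- Let n and m be natural numbers, let β_0, …, β_n be real numbers, and let φ_0, …, φ_n be nonzero polynomials with complex coefficients such that the n+1 real numbers μ_j := β_j + deg φ_j are pairwise distinct. Suppose there exist a nonzero complex constant c, a real number s, complex numbers z_1, …, z_m, and natural numbers e_1, …, e_m such that for every x > 0 the Wronskian at x (with derivatives taken within (0, ∞)) of the n+1 functions t ↦ t^{β_j}·φ_j(t) equals c · x^{s} · ∏_{ℓ=1}^{m} (x − z_ℓ)^{e_ℓ}. Then μ_0 + ⋯ + μ_n − n(n+1)/2 = s + e_1 + ⋯ + e_m; in particular, deg φ_0 + ⋯ + deg φ_n = s + e_1 + ⋯ + e_m − (β_0 + ⋯ + β_n) + n(n+1)/2. -/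

import Mathlib

/-!
Differentiating `t ^ β * P t` gives `t ^ (β - 1) * (β P + t P')`, so the `i`-th derivative is
`t ^ (β - i)` times a polynomial of degree at most `deg P` whose coefficient in degree `deg P`
is the falling factorial `(β + deg P)_i` times the leading coefficient of `P`. Pulling the powers
out of the rows and columns, the Wronskian is `x ^ (Σ β_j - n(n+1)/2) · Q x` with
`deg Q ≤ Σ deg φ_j`, and the coefficient of `Q` in that degree is `∏ lead φ_j` times the
Vandermonde determinant of the `μ_j`, which is nonzero as the `μ_j` are distinct. Comparing the
growth of both sides as `x → ∞` equates the total exponents.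
-/

open Polynomial Filter Set Topology

namespace Polynomial

variable {R : Type*} [CommRing R] {N : ℕ}

noncomputable def eulerShift (α : R) (P : R[X]) : R[X] :=
  C α * P + X * derivative P

noncomputable def eulerShiftIter (β : R) (P : R[X]) : ℕ → R[X]
  | 0 => P
  | i + 1 => eulerShift (β - i) (eulerShiftIter β P i)

theorem coeff_eulerShift (α : R) (P : R[X]) (k : ℕ) :
    (eulerShift α P).coeff k = (α + k) * P.coeff k := by
  rcases k with _ | k
  · simp [eulerShift, mul_coeff_zero]
  · simp only [eulerShift, coeff_add, coeff_C_mul, coeff_X_mul, coeff_derivative]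
    push_cast
    ring

theorem natDegree_eulerShift_le (α : R) (P : R[X]) :
    (eulerShift α P).natDegree ≤ P.natDegree :=
  natDegree_le_iff_coeff_eq_zero.2 fun k hk => by
    rw [coeff_eulerShift, coeff_eq_zero_of_natDegree_lt (by exact_mod_cast hk), mul_zero]

theorem natDegree_eulerShiftIter_le (β : R) (P : R[X]) (i : ℕ) :
    (eulerShiftIter β P i).natDegree ≤ P.natDegree := by
  induction i with
  | zero => exact le_rfl
  | succ i ih => exact (natDegree_eulerShift_le _ _).trans ih

theorem coeff_eulerShiftIter (β : R) (P : R[X]) (i k : ℕ) :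
    (eulerShiftIter β P i).coeff k = (descPochhammer R i).eval (β + k) * P.coeff k := by
  induction i with
  | zero => simp [eulerShiftIter]
  | succ i ih =>
    rw [eulerShiftIter, coeff_eulerShift, ih, descPochhammer_succ_eval]
    ring

theorem coeff_prod_sum_of_natDegree_le {ι : Type*} (s : Finset ι) (f : ι → R[X])
    (d : ι → ℕ) (h : ∀ i ∈ s, (f i).natDegree ≤ d i) :
    (∏ i ∈ s, f i).coeff (∑ i ∈ s, d i) = ∏ i ∈ s, (f i).coeff (d i) := by
  classical
  induction s using Finset.cons_induction with
  | empty => simp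
  | cons a s ha ih =>
    simp only [Finset.forall_mem_cons] at h
    rw [Finset.prod_cons, Finset.sum_cons, Finset.prod_cons,
      coeff_mul_add_eq_of_natDegree_le h.1
        ((natDegree_prod_le _ _).trans (Finset.sum_le_sum h.2)), ih h.2]

theorem natDegree_det_le_of_natDegree_le (M : Matrix (Fin N) (Fin N) R[X]) (d : Fin N → ℕ)
    (h : ∀ i j, (M i j).natDegree ≤ d j) : M.det.natDegree ≤ ∑ j, d j := by
  rw [Matrix.det_apply]
  refine natDegree_sum_le_of_forall_le _ _ fun σ _ => ?_
  rw [Units.smul_def, zsmul_eq_mul]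
  refine natDegree_mul_le.trans ?_
  rw [natDegree_intCast, zero_add]
  exact (natDegree_prod_le _ _).trans (Finset.sum_le_sum fun i _ => h (σ i) i)

theorem coeff_det_sum_of_natDegree_le (M : Matrix (Fin N) (Fin N) R[X]) (d : Fin N → ℕ)
    (h : ∀ i j, (M i j).natDegree ≤ d j) :
    M.det.coeff (∑ j, d j) = (Matrix.of fun i j => (M i j).coeff (d j)).det := by
  simp only [Matrix.det_apply, finsetSum_coeff, Units.smul_def, zsmul_eq_mul, coeff_intCast_mul,
    Matrix.of_apply]
  refine Finset.sum_congr rfl fun σ _ => ?_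
  rw [← coeff_prod_sum_of_natDegree_le _ _ _ fun i _ => h (σ i) i]

theorem coeff_det_eulerShiftIter [IsDomain R] (b : Fin N → R) (φ : Fin N → R[X]) :
    (Matrix.of fun i j : Fin N => eulerShiftIter (b j) (φ j) i).det.coeff
        (∑ j, (φ j).natDegree) =
      (∏ j, (φ j).leadingCoeff) *
        (Matrix.vandermonde fun j => b j + (φ j).natDegree).det := by
  rw [coeff_det_sum_of_natDegree_le _ _ fun i j => natDegree_eulerShiftIter_le _ _ _]
  simp only [Matrix.of_apply, coeff_eulerShiftIter, coeff_natDegree, mul_comm _ (leadingCoeff _)]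
  have h := Matrix.det_mul_row (fun j => (φ j).leadingCoeff)
    (Matrix.of fun i j : Fin N => (descPochhammer R i).eval (b j + (φ j).natDegree))
  simp only [Matrix.of_apply] at h
  rw [h, ← Matrix.det_transpose,
    Matrix.det_eval_matrixOfPolynomials_eq_det_vandermonde _ (fun i => descPochhammer R i)
      (fun i => descPochhammer_natDegree R i) (fun i => monic_descPochhammer R i)]
  rfl

theorem hasDerivAt_rpow_mul_eval (α : ℝ) (P : ℂ[X]) {x : ℝ} (hx : 0 < x) :
    HasDerivAt (fun t : ℝ => ((t ^ α : ℝ) : ℂ) * P.eval (t : ℂ))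
      (((x ^ (α - 1) : ℝ) : ℂ) * (eulerShift (α : ℂ) P).eval (x : ℂ)) x := by
  have hpow := (Real.hasDerivAt_rpow_const (p := α) (Or.inl hx.ne')).ofReal_comp
  refine (hpow.mul (P.hasDerivAt (x : ℂ)).comp_ofReal).congr_deriv ?_
  have hx' : ((x ^ α : ℝ) : ℂ) = ((x ^ (α - 1) : ℝ) : ℂ) * x := by
    rw [← Complex.ofReal_mul, ← Real.rpow_add_one hx.ne', sub_add_cancel]
  simp only [eulerShift, eval_add, eval_mul, eval_C, eval_X, hx', Complex.ofReal_mul]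
  ring

theorem iteratedDerivWithin_rpow_mul_eval (β : ℝ) (P : ℂ[X]) (i : ℕ) {x : ℝ} (hx : 0 < x) :
    iteratedDerivWithin i (fun t : ℝ => ((t ^ β : ℝ) : ℂ) * P.eval (t : ℂ)) (Ioi 0) x =
      ((x ^ (β - i) : ℝ) : ℂ) * (eulerShiftIter (β : ℂ) P i).eval (x : ℂ) := by
  induction i generalizing x with
  | zero => simp [eulerShiftIter]
  | succ i ih =>
    rw [iteratedDerivWithin_succ,
      derivWithin_congr (fun t (ht : t ∈ Ioi (0 : ℝ)) => ih ht) (ih hx),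
      (hasDerivAt_rpow_mul_eval _ _ hx).hasDerivWithinAt.derivWithin (uniqueDiffOn_Ioi 0 x hx)]
    push_cast [eulerShiftIter]
    ring_nf

theorem det_rpow_mul_eval (M : Matrix (Fin N) (Fin N) ℂ[X]) (b : Fin N → ℝ) {x : ℝ}
    (hx : 0 < x) :
    (Matrix.of fun i j : Fin N => ((x ^ (b j - i) : ℝ) : ℂ) * (M i j).eval (x : ℂ)).det =
      ((x ^ (∑ j, b j - ∑ i : Fin N, (i : ℝ)) : ℝ) : ℂ) * M.det.eval (x : ℂ) := by
  have hfactor :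
      (Matrix.of fun i j : Fin N => ((x ^ (b j - i) : ℝ) : ℂ) * (M i j).eval (x : ℂ)) =
      Matrix.diagonal (fun i : Fin N => ((x ^ (-(i : ℝ)) : ℝ) : ℂ)) *
        (evalRingHom (x : ℂ)).mapMatrix M * Matrix.diagonal (fun j => ((x ^ b j : ℝ) : ℂ)) := by
    ext i j
    simp only [Matrix.of_apply, Matrix.mul_diagonal, Matrix.diagonal_mul,
      RingHom.mapMatrix_apply, Matrix.map_apply, coe_evalRingHom]
    rw [sub_eq_neg_add, Real.rpow_add hx, Complex.ofReal_mul]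
    ring
  rw [hfactor, Matrix.det_mul, Matrix.det_mul, Matrix.det_diagonal, Matrix.det_diagonal,
    ← RingHom.map_det, coe_evalRingHom, ← Complex.ofReal_prod, ← Complex.ofReal_prod,
    ← Real.rpow_sum_of_pos hx, ← Real.rpow_sum_of_pos hx, sub_eq_neg_add, Real.rpow_add hx,
    Finset.sum_neg_distrib, Complex.ofReal_mul]
  ring

theorem det_iteratedDerivWithin_rpow_mul_eval (b : Fin N → ℝ) (φ : Fin N → ℂ[X]) {x : ℝ}
    (hx : 0 < x) :
    (Matrix.of fun i j : Fin N =>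
        iteratedDerivWithin i (fun t : ℝ => ((t ^ b j : ℝ) : ℂ) * (φ j).eval (t : ℂ))
          (Ioi 0) x).det =
      ((x ^ (∑ j, b j - ∑ i : Fin N, (i : ℝ)) : ℝ) : ℂ) *
        (Matrix.of fun i j : Fin N => eulerShiftIter (b j : ℂ) (φ j) i).det.eval (x : ℂ) := by
  simp only [iteratedDerivWithin_rpow_mul_eval _ _ _ hx]
  exact det_rpow_mul_eval _ b hx

theorem tendsto_eval_div_pow_natDegree (P : ℂ[X]) :
    Tendsto (fun x : ℝ => P.eval (x : ℂ) / (x : ℂ) ^ P.natDegree) atTop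
      (𝓝 P.leadingCoeff) := by
  have hinv : Tendsto (fun x : ℝ => ((x : ℂ))⁻¹) atTop (𝓝 0) := by
    simpa [Function.comp_def] using
      (Complex.continuous_ofReal.tendsto 0).comp tendsto_inv_atTop_zero
  -- `P x / x ^ deg P` is the reversed polynomial evaluated at `x⁻¹`.
  have hrev := ((reverse P).continuous.tendsto 0).comp hinv
  rw [Function.comp_def, ← coeff_zero_eq_eval_zero, coeff_zero_reverse] at hrev
  refine hrev.congr' ?_
  filter_upwards [eventually_gt_atTop 0] with x hx
  have hx' : (x : ℂ) ≠ 0 := Complex.ofReal_ne_zero.2 hx.ne'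
  let := invertibleOfNonzero hx'
  rw [eq_div_iff (pow_ne_zero _ hx')]
  simpa only [eval₂_id, invOf_eq_inv] using eval₂_reverse_mul_pow (RingHom.id ℂ) (x : ℂ) P

theorem eq_of_rpow_mul_eventuallyEq {a b : ℝ} {f g : ℝ → ℂ} {L M : ℂ}
    (hf : Tendsto f atTop (𝓝 L)) (hg : Tendsto g atTop (𝓝 M)) (hL : L ≠ 0) (hM : M ≠ 0)
    (h : ∀ᶠ x in atTop, ((x ^ a : ℝ) : ℂ) * f x = ((x ^ b : ℝ) : ℂ) * g x) : a = b := by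
  wlog hab : a ≤ b generalizing a b f g L M
  · exact (this hg hf hM hL (h.mono fun x hx => hx.symm) (le_of_not_ge hab)).symm
  refine hab.eq_or_lt.resolve_right fun hlt => ?_
  have hratio : Tendsto (fun x : ℝ => x ^ (b - a)) atTop (𝓝 (‖L‖ / ‖M‖)) := by
    refine (hf.norm.div hg.norm (norm_ne_zero_iff.2 hM)).congr' ?_
    filter_upwards [h, eventually_gt_atTop 0, hg.eventually_ne hM] with x hx hpos hgx
    have hnorm := congrArg norm hx
    simp only [norm_mul, Complex.norm_real, Real.norm_of_nonneg (Real.rpow_nonneg hpos.le _)]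
      at hnorm
    rw [Pi.div_apply, Real.rpow_sub hpos,
      div_eq_div_iff (norm_ne_zero_iff.2 hgx) (Real.rpow_pos_of_pos hpos _).ne']
    linarith
  exact not_tendsto_nhds_of_tendsto_atTop (tendsto_rpow_atTop (sub_pos.2 hlt)) _ hratio

theorem add_natDegree_eq_of_rpow_mul_eval_eq {P Q : ℂ[X]} (hP : P ≠ 0) (hQ : Q ≠ 0) {a b : ℝ}
    (h : ∀ x : ℝ, 0 < x →
      ((x ^ a : ℝ) : ℂ) * P.eval (x : ℂ) = ((x ^ b : ℝ) : ℂ) * Q.eval (x : ℂ)) :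
    a + P.natDegree = b + Q.natDegree := by
  refine eq_of_rpow_mul_eventuallyEq (tendsto_eval_div_pow_natDegree P)
    (tendsto_eval_div_pow_natDegree Q) (leadingCoeff_ne_zero.2 hP) (leadingCoeff_ne_zero.2 hQ) ?_
  filter_upwards [eventually_gt_atTop 0] with x hx
  have hx' : (x : ℂ) ≠ 0 := Complex.ofReal_ne_zero.2 hx.ne'
  simp only [Real.rpow_add hx, Real.rpow_natCast, Complex.ofReal_mul, Complex.ofReal_pow,
    mul_assoc, mul_div_cancel₀ _ (pow_ne_zero _ hx')]
  exact h x hx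

end Polynomial

theorem Fin.sum_univ_val_real (n : ℕ) : ∑ i : Fin (n + 1), (i : ℝ) = n * (n + 1) / 2 := by
  rw [Fin.sum_univ_eq_sum_range (fun i => (i : ℝ))]
  induction n with
  | zero => simp
  | succ n ih =>
    rw [Finset.sum_range_succ, ih]
    push_cast
    ring

/-- Degree count from the Wronskian: if the Wronskian of `t ↦ t^{β_j} φ_j(t)` equals
`c · x^s · ∏_ℓ (x − z_ℓ)^{e_ℓ}` on `(0,∞)`, with `μ_j = β_j + deg φ_j` pairwise distinct,
then `Σ μ_j − n(n+1)/2 = s + Σ e_ℓ`, hence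
`Σ deg φ_j = s + Σ e_ℓ − Σ β_j + n(n+1)/2`. -/
theorem wronskian_degree_count (n m : ℕ) (β : Fin (n + 1) → ℝ)
    (φ : Fin (n + 1) → Polynomial ℂ) (hφ : ∀ j, φ j ≠ 0)
    (μ : Fin (n + 1) → ℝ) (hμ : ∀ j, μ j = β j + ((φ j).natDegree : ℝ))
    (hinj : Function.Injective μ)
    (c : ℂ) (hc : c ≠ 0) (s : ℝ) (z : Fin m → ℂ) (e : Fin m → ℕ)
    (hW : ∀ x : ℝ, 0 < x →
      Matrix.det (Matrix.of fun i j : Fin (n + 1) =>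
        iteratedDerivWithin (i : ℕ)
          (fun t : ℝ => ((t ^ β j : ℝ) : ℂ) * (φ j).eval (t : ℂ)) (Set.Ioi (0 : ℝ)) x) =
      c * ((x ^ s : ℝ) : ℂ) * ∏ ℓ, ((x : ℂ) - z ℓ) ^ e ℓ) :
    (∑ j, μ j) - (n * (n + 1) : ℝ) / 2 = s + ∑ ℓ, (e ℓ : ℝ) ∧
    (∑ j, ((φ j).natDegree : ℝ)) =
      s + (∑ ℓ, (e ℓ : ℝ)) - (∑ j, β j) + (n * (n + 1) : ℝ) / 2 := by
  set Q := (Matrix.of fun i j : Fin (n + 1) => eulerShiftIter (β j : ℂ) (φ j) i).det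
  set R := C c * ∏ ℓ, (X - C (z ℓ)) ^ e ℓ
  have hQ_coeff : Q.coeff (∑ j, (φ j).natDegree) ≠ 0 := by
    rw [coeff_det_eulerShiftIter]
    refine mul_ne_zero (Finset.prod_ne_zero_iff.2 fun j _ => leadingCoeff_ne_zero.2 (hφ j))
      (Matrix.det_vandermonde_ne_zero_iff.2 fun j k hjk => hinj ?_)
    rw [hμ, hμ]
    exact_mod_cast hjk
  have hQ_deg : Q.natDegree = ∑ j, (φ j).natDegree :=
    natDegree_eq_of_le_of_coeff_ne_zero
      (natDegree_det_le_of_natDegree_le _ _ fun _ _ => natDegree_eulerShiftIter_le _ _ _) hQ_coeff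
  have hR_ne : R ≠ 0 :=
    mul_ne_zero (C_ne_zero.2 hc)
      (Finset.prod_ne_zero_iff.2 fun ℓ _ => pow_ne_zero _ (X_sub_C_ne_zero _))
  have hR_deg : R.natDegree = ∑ ℓ, e ℓ := by
    rw [natDegree_C_mul hc, natDegree_prod _ _ fun ℓ _ => pow_ne_zero _ (X_sub_C_ne_zero _)]
    simp only [natDegree_pow, natDegree_X_sub_C, mul_one]
  have hdeg : (∑ j, β j - ∑ i : Fin (n + 1), (i : ℝ)) + Q.natDegree = s + R.natDegree :=
    add_natDegree_eq_of_rpow_mul_eval_eq (fun hQ => hQ_coeff (by rw [hQ, coeff_zero])) hR_ne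
      fun x hx => by
        rw [← det_iteratedDerivWithin_rpow_mul_eval _ _ hx, hW x hx]
        simp only [R, eval_mul, eval_C, eval_prod, eval_pow, eval_sub, eval_X]
        ring
  rw [hQ_deg, hR_deg, Fin.sum_univ_val_real] at hdeg
  push_cast at hdeg
  simp only [hμ, Finset.sum_add_distrib]
  constructor <;> linarith
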